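/- Let μ be an instance of REP over Σ with words u_start, u_end and rules w_i → w'_i for 1 ≤ i ≤ n. There exists an overlapping solution h to the equation α_μ = β_μ if and only if μ satisfies REP. -/

import Mathlib

/-!
Framework for REP (Rewriting with Programmed Rules) and the associated word
equations α_μ = β_μ.  Constants: `Option A` models Σ ∪ {#}, where `none` is the
fresh letter `#` and `some a` embeds a ∈ Σ.  Variables are modelled by `ℕ`
(the variable x_i is `i`).
-/

namespace REP

/-- `u_end` is obtained from `u_start` by applying each of the `n` rules
`w i → w' i` (for `i = 1, …, n`) once, in order, each application replacing one
occurrence of `w i` by `w' i`. -/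
def SatisfiesREP {A : Type} (n : ℕ) (ustart uend : List A) (w w' : ℕ → List A) : Prop :=
  ∃ u : ℕ → List A, u 0 = ustart ∧ u n = uend ∧
    ∀ i, 1 ≤ i → i ≤ n → ∃ s t : List A,
      u (i - 1) = s ++ w i ++ t ∧ u i = s ++ w' i ++ t

/-- Apply a substitution (identity on constants) to a pattern. -/
def applySub {A : Type} (h : ℕ → List (Option A)) : List (Option A ⊕ ℕ) → List (Option A)
  | [] => []
  | Sum.inl a :: rest => a :: applySub h rest
  | Sum.inr x :: rest => h x ++ applySub h rest

/-- Embed a constant word over Σ into patterns over Σ ∪ {#}. -/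
def lift {A : Type} (u : List A) : List (Option A ⊕ ℕ) := u.map (fun a => Sum.inl (some a))

/-- Embed a constant word over Σ into words over Σ ∪ {#}. -/
def liftW {A : Type} (u : List A) : List (Option A) := u.map some

/-- The fresh letter `#` as a pattern symbol. -/
def hash {A : Type} : Option A ⊕ ℕ := Sum.inl none

/-- `x_1 w_1 x_2 w_2 ⋯ x_n w_n`. -/
def blocks {A : Type} (w : ℕ → List A) : ℕ → List (Option A ⊕ ℕ)
  | 0 => []
  | n + 1 => blocks w n ++ (Sum.inr (n + 1) :: lift (w (n + 1)))

/-- α_μ = `x_1 w_1 x_2 w_2 ⋯ x_n w_n x_{n+1} # u_end`. -/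
def alphaMu {A : Type} (n : ℕ) (uend : List A) (w : ℕ → List A) : List (Option A ⊕ ℕ) :=
  blocks w n ++ [Sum.inr (n + 1), hash] ++ lift uend

/-- β_μ = `# u_start x_1 w'_1 x_2 w'_2 ⋯ x_n w'_n x_{n+1}`. -/
def betaMu {A : Type} (n : ℕ) (ustart : List A) (w' : ℕ → List A) : List (Option A ⊕ ℕ) :=
  hash :: lift ustart ++ blocks w' n ++ [Sum.inr (n + 1)]

/-- `x_1 w_1 ⋯ x_i w_i`. -/
def alphaPrefix {A : Type} (w : ℕ → List A) (i : ℕ) : List (Option A ⊕ ℕ) := blocks w i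

/-- `# u_start x_1 w'_1 ⋯ w'_{i-1} x_i`. -/
def betaPrefix {A : Type} (ustart : List A) (w' : ℕ → List A) (i : ℕ) :
    List (Option A ⊕ ℕ) :=
  hash :: lift ustart ++ blocks w' (i - 1) ++ [Sum.inr i]

/-- `h` is a solution of the equation α = β. -/
def IsSolution {A : Type} (h : ℕ → List (Option A)) (α β : List (Option A ⊕ ℕ)) : Prop :=
  applySub h α = applySub h β

/-- `h` is an overlapping solution of α_μ = β_μ : it is a solution and, for every
`1 ≤ i ≤ n`, there is `z_i` such that `w_i z_i` is a suffix of `h(x_i)` and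
`h(# u_start x_1 w'_1 ⋯ w'_{i-1} x_i) = h(x_1 w_1 ⋯ x_i w_i) z_i`. -/
def OverlappingSolution {A : Type} (n : ℕ) (ustart uend : List A) (w w' : ℕ → List A)
    (h : ℕ → List (Option A)) : Prop :=
  IsSolution h (alphaMu n uend w) (betaMu n ustart w') ∧
  ∀ i, 1 ≤ i → i ≤ n → ∃ z : List (Option A),
    (liftW (w i) ++ z) <:+ h i ∧
    applySub h (betaPrefix ustart w' i) = applySub h (alphaPrefix w i) ++ z

/-- `n`-fold concatenation `u^n` of the word `u`. -/
def npow {A : Type} (u : List A) : ℕ → List A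
  | 0 => []
  | n + 1 => u ++ npow u n

/-- `y_i`, the suffix of `h(x_i)` of length `|v_i| - |w_i|`. -/
def ySuf {A : Type} (h : ℕ → List (Option A)) (v : ℕ → List (Option A)) (w : ℕ → List A)
    (i : ℕ) : List (Option A) :=
  (h i).drop ((h i).length - ((v i).length - (w i).length))

/-- Two words are conjugate if `u = st` and `v = ts` for some words `s`, `t`. -/
def Conj {B : Type} (u v : List B) : Prop := ∃ s t : List B, u = s ++ t ∧ v = t ++ s

/-- The words `v_1, …, v_n` associated with an overlapping solution `h`
(as guaranteed by the characterisation of overlapping solutions):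
`v_i` is a prefix of `h(x_i)`, `|w_i| ≤ |v_i|`, `h(x_i) w_i` is a prefix of `v_i^ω`
(i.e. of `v_i^m` for all sufficiently large `m`), `v_1 = # u_start`,
`v_i = y_{i-1} w'_{i-1}` for `2 ≤ i ≤ n`, and `y_n w'_n h(x_{n+1}) = h(x_{n+1}) # u_end`. -/
def AssocWords {A : Type} (n : ℕ) (ustart uend : List A) (w w' : ℕ → List A)
    (h : ℕ → List (Option A)) (v : ℕ → List (Option A)) : Prop :=
  (∀ i, 1 ≤ i → i ≤ n →
    v i <+: h i ∧ (w i).length ≤ (v i).length ∧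
    ∃ N : ℕ, ∀ m : ℕ, N ≤ m → (h i ++ liftW (w i)) <+: npow (v i) m) ∧
  v 1 = none :: liftW ustart ∧
  (∀ i, 2 ≤ i → i ≤ n → v i = ySuf h v w (i - 1) ++ liftW (w' (i - 1))) ∧
  ySuf h v w n ++ liftW (w' n) ++ h (n + 1) = h (n + 1) ++ none :: liftW uend

end REP

/-!
Comparing the overlap conditions at consecutive indices shows that `# u_i`, where `u_i` is the
current word of the rewriting, is conjugate to `w_{i+1} z_{i+1}`. As `#` occurs exactly once, a
conjugate of `# u` that starts with `w` forces `u = s w t` and `z = t # s`; then `# (s w' t)` is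
conjugate to `z w'`, which is the next rewriting step. At the end the equation itself makes `# u_n`
conjugate to `# u_end`, whence `u_n = u_end`. Conversely, factorisations `u_{j-1} = s_j w_j t_j`
of a rewriting sequence give the overlapping solution `x_j ↦ t_{j-1} # u_{j-1} # s_j`,
`x_{n+1} ↦ t_n`, with `t_0` empty.
-/

namespace REP

variable {A : Type}

theorem conj_of_append_eq_append {B : Type} {u v x : List B} (h : u ++ x = x ++ v) :
    Conj u v := by
  rcases List.append_eq_append_iff.mp h with ⟨y, hxu, hxv⟩ | ⟨c, hu, hv⟩
  · cases u with
    | nil =>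
      have hv : v = [] := by subst hxu; simpa using hxv
      exact ⟨[], [], by simp, by simp [hv]⟩
    | cons b u =>
      have : y.length < x.length := by simp [hxu]
      exact conj_of_append_eq_append (hxu.symm.trans hxv)
  · exact ⟨x, c, hu, hv⟩
termination_by x.length

theorem liftW_injective : Function.Injective (liftW : List A → List (Option A)) :=
  List.map_injective_iff.mpr (Option.some_injective A)

theorem exists_eq_of_conj_hash_cons {u : List A} {M : List (Option A)}
    (h : Conj (none :: liftW u) M) : ∃ s t, u = s ++ t ∧ M = liftW t ++ none :: liftW s := by
  obtain ⟨p, q, hpq, rfl⟩ := h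
  cases p with
  | nil => exact ⟨u, [], by simp, by simpa [liftW] using hpq.symm⟩
  | cons a p =>
    obtain ⟨rfl, hu⟩ := List.cons_eq_cons.mp hpq
    obtain ⟨s, t, rfl, rfl, rfl⟩ := List.map_eq_append_iff.mp hu
    exact ⟨s, t, rfl, by simp [liftW]⟩

theorem exists_append_of_liftW_append_eq {a b : List A} {z c : List (Option A)}
    (h : liftW a ++ z = liftW b ++ none :: c) : ∃ t, b = a ++ t ∧ z = liftW t ++ none :: c := by
  induction a generalizing b with
  | nil => exact ⟨b, rfl, h⟩
  | cons x a ih =>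
    cases b with
    | nil => simp [liftW] at h
    | cons y b =>
      simp only [liftW, List.map_cons, List.cons_append, List.cons_eq_cons,
        Option.some_inj] at h
      obtain ⟨t, rfl, hz⟩ := ih h.2
      exact ⟨t, by simp [h.1], hz⟩

theorem exists_factorization_of_hash_conj {u w : List A} {Y z : List (Option A)}
    (h : none :: liftW u ++ Y = Y ++ (liftW w ++ z)) :
    ∃ s t, u = s ++ w ++ t ∧ z = liftW t ++ none :: liftW s := by
  obtain ⟨s, t, rfl, hwz⟩ := exists_eq_of_conj_hash_cons (conj_of_append_eq_append h)
  obtain ⟨t, rfl, rfl⟩ := exists_append_of_liftW_append_eq hwz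
  exact ⟨s, t, by simp, rfl⟩

theorem eq_of_hash_conj {u v : List A} {Y : List (Option A)}
    (h : none :: liftW u ++ Y = Y ++ none :: liftW v) : u = v := by
  obtain ⟨s, t, rfl, ht⟩ := exists_factorization_of_hash_conj (w := []) h
  cases t with
  | nil => simpa using (liftW_injective (List.cons_eq_cons.mp ht).2).symm
  | cons a t => simp [liftW] at ht

section applySub

variable (h : ℕ → List (Option A))

theorem applySub_append (α β : List (Option A ⊕ ℕ)) :
    applySub h (α ++ β) = applySub h α ++ applySub h β := by
  induction α with
  | nil => rfl
  | cons a α ih => cases a <;> simp [applySub, ih]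

@[simp]
theorem applySub_lift (u : List A) : applySub h (lift u) = liftW u := by
  induction u with
  | nil => rfl
  | cons a u ih => simpa [lift, liftW, applySub] using ih

theorem applySub_blocks_succ (w : ℕ → List A) (i : ℕ) :
    applySub h (blocks w (i + 1)) = applySub h (blocks w i) ++ h (i + 1) ++ liftW (w (i + 1)) := by
  simp [blocks, applySub_append, applySub]

theorem applySub_betaPrefix_succ (ustart : List A) (w' : ℕ → List A) (i : ℕ) :
    applySub h (betaPrefix ustart w' (i + 1)) =
      none :: liftW ustart ++ applySub h (blocks w' i) ++ h (i + 1) := by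
  simp [betaPrefix, hash, applySub, applySub_append]

theorem applySub_betaMu (n : ℕ) (ustart : List A) (w' : ℕ → List A) :
    applySub h (betaMu n ustart w') =
      none :: liftW ustart ++ applySub h (blocks w' n) ++ h (n + 1) := by
  simp [betaMu, hash, applySub, applySub_append]

theorem applySub_alphaMu (n : ℕ) (uend : List A) (w : ℕ → List A) :
    applySub h (alphaMu n uend w) = applySub h (blocks w n) ++ h (n + 1) ++ none :: liftW uend := by
  simp [alphaMu, hash, applySub, applySub_append]

end applySub

def IsRun (i : ℕ) (ustart : List A) (w w' : ℕ → List A) (u : ℕ → List A) : Prop :=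
  u 0 = ustart ∧ ∀ j, 1 ≤ j → j ≤ i → ∃ s t, u (j - 1) = s ++ w j ++ t ∧ u j = s ++ w' j ++ t

theorem IsRun.extend {i : ℕ} {ustart : List A} {w w' u : ℕ → List A} {s t : List A}
    (hu : IsRun i ustart w w' u) (hi : u i = s ++ w (i + 1) ++ t) :
    IsRun (i + 1) ustart w w' (Function.update u (i + 1) (s ++ w' (i + 1) ++ t)) := by
  refine ⟨by simpa using hu.1, fun j hj1 hj2 => ?_⟩
  rcases Nat.lt_or_eq_of_le hj2 with hj | rfl
  · simpa [Function.update_of_ne (Nat.ne_of_lt hj),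
      Function.update_of_ne (by omega : j - 1 ≠ i + 1)] using hu.2 j hj1 (by omega)
  · exact ⟨s, t, by simpa using hi, by simp⟩

section forward

variable {n : ℕ} {ustart : List A} {w w' : ℕ → List A} {h : ℕ → List (Option A)}

theorem exists_run_of_overlapping
    (hover : ∀ i, 1 ≤ i → i ≤ n → ∃ z : List (Option A),
      applySub h (betaPrefix ustart w' i) = applySub h (alphaPrefix w i) ++ z) :
    ∀ i ≤ n, ∃ u, IsRun i ustart w w' u ∧ ∃ X D,
      applySub h (betaPrefix ustart w' (i + 1)) = applySub h (blocks w i) ++ D ∧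
      none :: liftW (u i) ++ X ++ h (i + 1) = X ++ D := by
  intro i hi
  induction i with
  | zero =>
    refine ⟨fun _ => ustart, ⟨rfl, fun j hj1 hj2 => by omega⟩, [], none :: liftW ustart ++ h 1,
      ?_, by simp⟩
    simp [applySub_betaPrefix_succ, blocks, applySub]
  | succ i ih =>
    obtain ⟨u, hrun, X, D, hQ, hX⟩ := ih (by omega)
    obtain ⟨z, hz⟩ := hover (i + 1) (by omega) hi
    rw [alphaPrefix] at hz
    have hD : D = h (i + 1) ++ (liftW (w (i + 1)) ++ z) := by
      rw [hQ, applySub_blocks_succ, List.append_assoc, List.append_assoc] at hz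
      exact List.append_cancel_left hz
    have hconj : none :: liftW (u i) ++ (X ++ h (i + 1)) =
        (X ++ h (i + 1)) ++ (liftW (w (i + 1)) ++ z) := by
      rw [← List.append_assoc, hX, hD]
      simp
    obtain ⟨s, t, hst, rfl⟩ := exists_factorization_of_hash_conj hconj
    refine ⟨_, hrun.extend hst, none :: liftW (s ++ w' (i + 1)),
      liftW t ++ none :: liftW s ++ liftW (w' (i + 1)) ++ h (i + 2), ?_, by simp [liftW]⟩
    calc applySub h (betaPrefix ustart w' (i + 2))
        = applySub h (betaPrefix ustart w' (i + 1)) ++ liftW (w' (i + 1)) ++ h (i + 2) := by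
          simp [applySub_betaPrefix_succ, applySub_blocks_succ]
      _ = _ := by simp [hz]

theorem satisfiesREP_of_overlappingSolution {uend : List A}
    (hsol : OverlappingSolution n ustart uend w w' h) : SatisfiesREP n ustart uend w w' := by
  obtain ⟨u, hrun, X, D, hQ, hX⟩ :=
    exists_run_of_overlapping (fun i h1 h2 => (hsol.2 i h1 h2).imp fun _ => And.right) n le_rfl
  have hD : D = h (n + 1) ++ none :: liftW uend := by
    have hαβ := hsol.1
    rw [IsSolution, applySub_alphaMu, applySub_betaMu, ← applySub_betaPrefix_succ, hQ,
      List.append_assoc] at hαβ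
    exact (List.append_cancel_left hαβ).symm
  refine ⟨u, hrun.1, eq_of_hash_conj (Y := X ++ h (n + 1)) ?_, hrun.2⟩
  rw [← List.append_assoc, hX, hD]
  simp

end forward

section backward

variable {n : ℕ} {ustart uend : List A} {w w' : ℕ → List A}

theorem SatisfiesREP.exists_factorization (hrep : SatisfiesREP n ustart uend w w') :
    ∃ u s t : ℕ → List A, u 0 = ustart ∧ u n = uend ∧ t 0 = [] ∧
      ∀ i, 1 ≤ i → i ≤ n → u (i - 1) = s i ++ w i ++ t i ∧ u i = s i ++ w' i ++ t i := by
  obtain ⟨u, hu0, hun, hstep⟩ := hrep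
  choose! s t hst using hstep
  refine ⟨u, s, Function.update t 0 [], hu0, hun, by simp, fun i hi1 hi2 => ?_⟩
  simpa [Function.update_of_ne (by omega : i ≠ 0)] using hst i hi1 hi2

/-- For `j ≤ n`, `u (j - 1) = s j ++ w j ++ t j` makes `h(x_j) = t_{j-1} # s_j w_j t_j # s_j`
end with `w_j z_j`, where `z_j = t_j # s_j`. -/
def runSubst (n : ℕ) (u s t : ℕ → List A) (j : ℕ) : List (Option A) :=
  if j = n + 1 then liftW (t n)
  else liftW (t (j - 1)) ++ none :: liftW (u (j - 1)) ++ none :: liftW (s j)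

variable {u s t : ℕ → List A}

theorem runSubst_succ_of_lt {i : ℕ} (hi : i < n) :
    runSubst n u s t (i + 1) = liftW (t i) ++ none :: liftW (u i) ++ none :: liftW (s (i + 1)) := by
  simp [runSubst, show i ≠ n by omega]

theorem runSubst_last : runSubst n u s t (n + 1) = liftW (t n) := by
  simp [runSubst]

theorem hash_applySub_runSubst_blocks (hu0 : u 0 = ustart) (ht0 : t 0 = [])
    (hstep : ∀ i, 1 ≤ i → i ≤ n → u (i - 1) = s i ++ w i ++ t i ∧ u i = s i ++ w' i ++ t i) :
    ∀ i ≤ n, none :: liftW ustart ++ applySub (runSubst n u s t) (blocks w' i) ++ liftW (t i) =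
      applySub (runSubst n u s t) (blocks w i) ++ liftW (t i) ++ none :: liftW (u i) := by
  intro i hi
  induction i with
  | zero => simp [blocks, applySub, hu0, ht0, liftW]
  | succ i ih =>
    obtain ⟨hbefore, hafter⟩ := hstep (i + 1) (by omega) hi
    rw [Nat.add_sub_cancel] at hbefore
    set H := runSubst n u s t
    calc none :: liftW ustart ++ applySub H (blocks w' (i + 1)) ++ liftW (t (i + 1))
        = (none :: liftW ustart ++ applySub H (blocks w' i) ++ liftW (t i)) ++
            none :: liftW (u i) ++ none :: liftW (u (i + 1)) := by
          simp [H, applySub_blocks_succ, runSubst_succ_of_lt (show i < n by omega), hafter, liftW]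
      _ = applySub H (blocks w i) ++ liftW (t i) ++ none :: liftW (u i) ++
            none :: liftW (u i) ++ none :: liftW (u (i + 1)) := by
          rw [ih (by omega)]
      _ = applySub H (blocks w (i + 1)) ++ liftW (t (i + 1)) ++ none :: liftW (u (i + 1)) := by
          simp [H, applySub_blocks_succ, runSubst_succ_of_lt (show i < n by omega), hbefore, liftW]

theorem overlappingSolution_runSubst (hu0 : u 0 = ustart) (hun : u n = uend) (ht0 : t 0 = [])
    (hstep : ∀ i, 1 ≤ i → i ≤ n → u (i - 1) = s i ++ w i ++ t i ∧ u i = s i ++ w' i ++ t i) :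
    OverlappingSolution n ustart uend w w' (runSubst n u s t) := by
  have hinv := hash_applySub_runSubst_blocks hu0 ht0 hstep
  refine ⟨?_, fun i hi1 hi2 => ?_⟩
  · rw [IsSolution, applySub_alphaMu, applySub_betaMu, runSubst_last, hinv n le_rfl, hun]
  · obtain ⟨k, rfl⟩ : ∃ k, i = k + 1 := ⟨i - 1, by omega⟩
    obtain ⟨hbefore, -⟩ := hstep (k + 1) hi1 hi2
    rw [Nat.add_sub_cancel] at hbefore
    refine ⟨liftW (t (k + 1)) ++ none :: liftW (s (k + 1)),
      ⟨liftW (t k) ++ [none] ++ liftW (s (k + 1)), ?_⟩, ?_⟩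
    · simp [runSubst_succ_of_lt (show k < n by omega), hbefore, liftW]
    · calc applySub (runSubst n u s t) (betaPrefix ustart w' (k + 1))
          = (none :: liftW ustart ++ applySub (runSubst n u s t) (blocks w' k) ++ liftW (t k)) ++
              none :: liftW (u k) ++ none :: liftW (s (k + 1)) := by
            simp [applySub_betaPrefix_succ, runSubst_succ_of_lt (show k < n by omega)]
        _ = _ := by
          rw [hinv k (by omega), alphaPrefix, applySub_blocks_succ,
            runSubst_succ_of_lt (show k < n by omega), hbefore]
          simp [liftW]

end backward

end REP

open REP in
theorem stmt4 (A : Type) (n : ℕ) (ustart uend : List A) (w w' : ℕ → List A) :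
    (∃ h : ℕ → List (Option A), OverlappingSolution n ustart uend w w' h) ↔
    SatisfiesREP n ustart uend w w' := by
  constructor
  · rintro ⟨h, hsol⟩
    exact satisfiesREP_of_overlappingSolution hsol
  · intro hrep
    obtain ⟨u, s, t, hu0, hun, ht0, hstep⟩ := hrep.exists_factorization
    exact ⟨runSubst n u s t, overlappingSolution_runSubst hu0 hun ht0 hstep⟩
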